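/- arXiv:1205.6224 — 7 statements merged into one kernel-verified Lean document; each statement's English description precedes it below -/
import Mathlib

section
/- Let A ⊆ ℝ^d and h ∈ 𝒟. If P_0^h(A) = 0, then there exists g ∈ 𝒟 with g ≺ h such that P_0^g(A) = 0. -/
open Set Metric Filter Topology
open scoped ENNReal

/-- `h` is a dimension function: continuous and nondecreasing on `(0,∞)`, positive
there, and tending to `0` as `t → 0⁺`. -/
def IsDimFun (h : ℝ → ℝ) : Prop :=
  ContinuousOn h (Ioi 0) ∧ MonotoneOn h (Ioi 0) ∧ (∀ t, 0 < t → 0 < h t) ∧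
    Tendsto h (𝓝[>] (0:ℝ)) (𝓝 0)

/-- `g ≺ h` : `g` is a smaller dimension than `h`, i.e. `lim_{t→0⁺} h(t)/g(t) = 0`. -/
def DimLT (g h : ℝ → ℝ) : Prop :=
  Tendsto (fun t => h t / g t) (𝓝[>] (0:ℝ)) (𝓝 0)

/-- `h ∈ 𝒟_d`: `h` is a doubling, at most `d`-dimensional dimension function. -/
def IsDimFunD (d : ℕ) (h : ℝ → ℝ) : Prop :=
  IsDimFun h ∧ (∃ c₀ > (0:ℝ), ∀ t > (0:ℝ), t ^ d ≤ c₀ * h t) ∧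
    ∃ c₁ > (0:ℝ), ∀ t > (0:ℝ), h (2 * t) ≤ c₁ * h t

/-- `P_δ^h(E)`: supremum of `∑ h(|Bᵢ|)` over countable `δ`-packings of `E`, where a
`δ`-packing is a countable collection of pairwise disjoint open balls centered at
points of `E` with diameters (`= 2r`) less than `δ`. -/
noncomputable def packingPre (d : ℕ) (h : ℝ → ℝ) (δ : ℝ)
    (E : Set (EuclideanSpace ℝ (Fin d))) : ℝ≥0∞ :=
  ⨆ (c : ℕ → EuclideanSpace ℝ (Fin d)) (r : ℕ → ℝ) (s : Set ℕ)
    (_ : ∀ i ∈ s, c i ∈ E) (_ : ∀ i ∈ s, 0 < r i) (_ : ∀ i ∈ s, 2 * r i < δ)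
    (_ : s.PairwiseDisjoint fun i => ball (c i) (r i)),
    ∑' i : s, ENNReal.ofReal (h (2 * r (i : ℕ)))

/-- The packing premeasure `P_0^h(E) = inf_{δ>0} P_δ^h(E)`. -/
noncomputable def packingPre0 (d : ℕ) (h : ℝ → ℝ)
    (E : Set (EuclideanSpace ℝ (Fin d))) : ℝ≥0∞ :=
  ⨅ (δ : ℝ) (_ : 0 < δ), packingPre d h δ E

/-- The packing measure `𝒫^h(E)`. -/
noncomputable def packingMeasure (d : ℕ) (h : ℝ → ℝ)
    (E : Set (EuclideanSpace ℝ (Fin d))) : ℝ≥0∞ :=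
  ⨅ (F : ℕ → Set (EuclideanSpace ℝ (Fin d))) (_ : E ⊆ ⋃ j, F j),
    ∑' j, packingPre0 d h (F j)

/-- `E` has non-σ-finite `𝒫^h` measure: `E` is not a countable union of sets of
finite `𝒫^h` measure. -/
def NonSigmaFinitePacking (d : ℕ) (h : ℝ → ℝ)
    (E : Set (EuclideanSpace ℝ (Fin d))) : Prop :=
  ¬ ∃ F : ℕ → Set (EuclideanSpace ℝ (Fin d)),
      E ⊆ ⋃ j, F j ∧ ∀ j, packingMeasure d h (F j) < ⊤

/-- `A ⊆ ℝ^d` is analytic: a continuous image of `ℕ^ℕ`. -/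
def IsAnalyticSet' (d : ℕ) (A : Set (EuclideanSpace ℝ (Fin d))) : Prop :=
  ∃ φ : (ℕ → ℕ) → EuclideanSpace ℝ (Fin d), Continuous φ ∧ A = Set.range φ

/-!
Choose scales `δ k > 0` with `P_{δ k}^h(A) ≤ 2⁻ᵏ` and put `b k = 2⁻ᵏ min (h (δ k)) 1`. The function
`G s = ∑ₖ min s (b k)` is a dimension function with `G s / s → ∞` as `s → 0⁺`, so `g = G ∘ h`
satisfies `g ≺ h`. For a ball of diameter `t`, the `k`-th summand of `g t` is at most `h t` when
`t < δ k` and at most `2⁻ᵏ h t` otherwise, whence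
`P_δ^g(A) ≤ ∑ₖ P_{min δ (δ k)}^h(A) + 2 P_δ^h(A)`, and the right-hand side tends to `0` as
`δ → 0⁺` by dominated convergence.
-/

open MeasureTheory in
theorem ENNReal.tendsto_tsum_of_dominated_convergence {α : Type*} {l : Filter α}
    [l.IsCountablyGenerated] {F : α → ℕ → ℝ≥0∞} {f bound : ℕ → ℝ≥0∞}
    (h_fin : ∑' k, bound k ≠ ∞) (h_bound : ∀ᶠ x in l, ∀ k, F x k ≤ bound k)
    (h_lim : ∀ k, Tendsto (F · k) l (𝓝 (f k))) :
    Tendsto (fun x => ∑' k, F x k) l (𝓝 (∑' k, f k)) := by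
  simp_rw [← lintegral_count]
  refine tendsto_lintegral_filter_of_dominated_convergence bound
    (.of_forall fun _ => measurable_of_countable _) (h_bound.mono fun _ hx => ae_of_all _ hx)
    (by rwa [lintegral_count]) (ae_of_all _ h_lim)

section PackingPremeasure

variable {d : ℕ} {h : ℝ → ℝ} {E : Set (EuclideanSpace ℝ (Fin d))}

theorem le_packingPre {δ : ℝ} {c : ℕ → EuclideanSpace ℝ (Fin d)} {r : ℕ → ℝ} {s : Set ℕ}
    (hc : ∀ i ∈ s, c i ∈ E) (hr : ∀ i ∈ s, 0 < r i) (hrδ : ∀ i ∈ s, 2 * r i < δ)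
    (hs : s.PairwiseDisjoint fun i => ball (c i) (r i)) :
    ∑' i : s, ENNReal.ofReal (h (2 * r i)) ≤ packingPre d h δ E := by
  unfold packingPre
  exact le_iSup_of_le c <| le_iSup_of_le r <| le_iSup_of_le s <| le_iSup_of_le hc <|
    le_iSup_of_le hr <| le_iSup_of_le hrδ <| le_iSup_of_le hs le_rfl

theorem packingPre_le {δ : ℝ} {M : ℝ≥0∞}
    (H : ∀ (c : ℕ → EuclideanSpace ℝ (Fin d)) (r : ℕ → ℝ) (s : Set ℕ),
      (∀ i ∈ s, c i ∈ E) → (∀ i ∈ s, 0 < r i) → (∀ i ∈ s, 2 * r i < δ) →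
      (s.PairwiseDisjoint fun i => ball (c i) (r i)) →
      ∑' i : s, ENNReal.ofReal (h (2 * r i)) ≤ M) :
    packingPre d h δ E ≤ M := by
  simp only [packingPre, iSup_le_iff]
  exact H

theorem packingPre_mono {δ δ' : ℝ} (hδ : δ ≤ δ') : packingPre d h δ E ≤ packingPre d h δ' E :=
  packingPre_le fun _ _ _ hc hr hrδ hs =>
    le_packingPre hc hr (fun i hi => (hrδ i hi).trans_le hδ) hs

theorem tsum_indicator_le_packingPre {δ δ' : ℝ} {c : ℕ → EuclideanSpace ℝ (Fin d)} {r : ℕ → ℝ}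
    {s : Set ℕ} (hc : ∀ i ∈ s, c i ∈ E) (hr : ∀ i ∈ s, 0 < r i) (hrδ : ∀ i ∈ s, 2 * r i < δ)
    (hs : s.PairwiseDisjoint fun i => ball (c i) (r i)) :
    ∑' i : s, (Iio δ').indicator (fun t => ENNReal.ofReal (h t)) (2 * r i) ≤
      packingPre d h (min δ δ') E := by
  calc ∑' i : s, (Iio δ').indicator (fun t => ENNReal.ofReal (h t)) (2 * r i)
      = ∑' i : ↥(s ∩ {i | 2 * r i < δ'}), ENNReal.ofReal (h (2 * r i)) := by
        rw [tsum_subtype s fun i => (Iio δ').indicator (fun t => ENNReal.ofReal (h t)) (2 * r i),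
          tsum_subtype _ fun i => ENNReal.ofReal (h (2 * r i)), ← indicator_indicator]
        rfl
    _ ≤ packingPre d h (min δ δ') E :=
        le_packingPre (fun i hi => hc i hi.1) (fun i hi => hr i hi.1)
          (fun i hi => lt_min (hrδ i hi.1) hi.2) (hs.subset inter_subset_left)

theorem packingPre0_eq_zero_iff :
    packingPre0 d h E = 0 ↔ Tendsto (fun δ => packingPre d h δ E) (𝓝[>] 0) (𝓝 0) := by
  constructor
  · intro h0
    refine ENNReal.tendsto_nhds_zero.2 fun ε hε => ?_
    have hlt : packingPre0 d h E < ε := h0 ▸ hε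
    obtain ⟨δ, hδ, hδε⟩ : ∃ δ > 0, packingPre d h δ E < ε := by
      simpa [packingPre0, iInf_lt_iff] using hlt
    filter_upwards [Ioo_mem_nhdsGT hδ] with δ' hδ'
    exact (packingPre_mono hδ'.2.le).trans hδε.le
  · intro hlim
    refine nonpos_iff_eq_zero.1 (ge_of_tendsto hlim ?_)
    filter_upwards [self_mem_nhdsWithin] with δ hδ
    exact iInf₂_le δ hδ

theorem tendsto_tsum_packingPre_min {δ : ℕ → ℝ}
    (hE : Tendsto (fun δ => packingPre d h δ E) (𝓝[>] 0) (𝓝 0))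
    (hδ : ∑' k, packingPre d h (δ k) E ≠ ∞) :
    Tendsto (fun δ' => ∑' k, packingPre d h (min δ' (δ k)) E) (𝓝[>] 0) (𝓝 0) := by
  simpa using ENNReal.tendsto_tsum_of_dominated_convergence (f := 0) hδ
    (.of_forall fun _ _ => packingPre_mono (min_le_right _ _)) fun _ =>
      tendsto_of_tendsto_of_tendsto_of_le_of_le tendsto_const_nhds hE (fun _ => zero_le)
        fun _ => packingPre_mono (min_le_left _ _)

theorem packingPre_le_tsum_add {g : ℝ → ℝ} {δ : ℝ} {δ' : ℕ → ℝ} {C : ℝ≥0∞}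
    (hgh : ∀ t, 0 < t → ENNReal.ofReal (g t) ≤
      ∑' k, (Iio (δ' k)).indicator (fun t => ENNReal.ofReal (h t)) t +
        C * ENNReal.ofReal (h t)) :
    packingPre d g δ E ≤ ∑' k, packingPre d h (min δ (δ' k)) E + C * packingPre d h δ E := by
  refine packingPre_le fun c r s hc hr hrδ hs => ?_
  calc ∑' i : s, ENNReal.ofReal (g (2 * r i))
      ≤ ∑' i : s, (∑' k, (Iio (δ' k)).indicator (fun t => ENNReal.ofReal (h t)) (2 * r i) +
          C * ENNReal.ofReal (h (2 * r i))) :=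
        ENNReal.tsum_le_tsum fun i => hgh _ (by linarith [hr i i.2])
    _ = ∑' k, ∑' i : s, (Iio (δ' k)).indicator (fun t => ENNReal.ofReal (h t)) (2 * r i) +
          C * ∑' i : s, ENNReal.ofReal (h (2 * r i)) := by
        rw [ENNReal.tsum_add, ENNReal.tsum_comm, ENNReal.tsum_mul_left]
    _ ≤ _ := add_le_add (ENNReal.tsum_le_tsum fun _ => tsum_indicator_le_packingPre hc hr hrδ hs)
          (mul_le_mul_right (le_packingPre hc hr hrδ hs) C)

end PackingPremeasure

theorem IsDimFun.tendsto_nhdsGT {h : ℝ → ℝ} (hh : IsDimFun h) :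
    Tendsto h (𝓝[>] 0) (𝓝[>] 0) :=
  tendsto_nhdsWithin_iff.2 ⟨hh.2.2.2, eventually_nhdsWithin_of_forall hh.2.2.1⟩

theorem IsDimFun.comp {G h : ℝ → ℝ} (hG : IsDimFun G) (hh : IsDimFun h) : IsDimFun (G ∘ h) := by
  have hmaps : MapsTo h (Ioi 0) (Ioi 0) := hh.2.2.1
  exact ⟨hG.1.comp hh.1 hmaps, hG.2.1.comp hh.2.1 hmaps, fun t ht => hG.2.2.1 _ (hmaps ht),
    hG.2.2.2.comp hh.tendsto_nhdsGT⟩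

theorem DimLT.comp {G F h : ℝ → ℝ} (hGF : DimLT G F) (hh : IsDimFun h) :
    DimLT (G ∘ h) (F ∘ h) :=
  Tendsto.comp hGF hh.tendsto_nhdsGT

noncomputable def sumMin (b : ℕ → ℝ) (s : ℝ) : ℝ := ∑' k, min s (b k)

section SumMin

variable {b : ℕ → ℝ}

theorem summable_min (hb0 : ∀ k, 0 ≤ b k) (hb : Summable b) {s : ℝ} (hs : 0 ≤ s) :
    Summable fun k => min s (b k) :=
  hb.of_nonneg_of_le (fun k => le_min hs (hb0 k)) fun _ => min_le_right _ _

theorem continuousOn_sumMin (hb0 : ∀ k, 0 ≤ b k) (hb : Summable b) :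
    ContinuousOn (sumMin b) (Ici 0) :=
  continuousOn_tsum (fun _ => (continuous_id.min continuous_const).continuousOn) hb fun k s hs => by
    rw [Real.norm_of_nonneg (le_min hs (hb0 k))]
    exact min_le_right _ _

theorem sumMin_zero (hb0 : ∀ k, 0 ≤ b k) : sumMin b 0 = 0 := by
  simp [sumMin, hb0]

theorem nat_mul_le_sumMin (hb0 : ∀ k, 0 ≤ b k) (hb : Summable b) {s : ℝ} (hs : 0 ≤ s) {N : ℕ}
    (hN : ∀ k < N, s ≤ b k) : N * s ≤ sumMin b s := by
  calc (N : ℝ) * s = ∑ k ∈ Finset.range N, min s (b k) := by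
        rw [Finset.sum_congr rfl fun k hk => min_eq_left (hN k (Finset.mem_range.1 hk))]
        simp
    _ ≤ sumMin b s := (summable_min hb0 hb hs).sum_le_tsum _ fun k _ => le_min hs (hb0 k)

theorem isDimFun_sumMin (hb0 : ∀ k, 0 < b k) (hb : Summable b) : IsDimFun (sumMin b) := by
  have hb0' : ∀ k, 0 ≤ b k := fun k => (hb0 k).le
  refine ⟨(continuousOn_sumMin hb0' hb).mono Ioi_subset_Ici_self,
    fun s hs t ht hst => ?_, fun s hs => ?_, ?_⟩
  · exact Summable.tsum_le_tsum (fun k => min_le_min_right _ hst)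
      (summable_min hb0' hb hs.le) (summable_min hb0' hb ht.le)
  · exact (summable_min hb0' hb hs.le).tsum_pos (fun k => le_min hs.le (hb0' k)) 0
      (lt_min hs (hb0 0))
  · have := (continuousOn_sumMin hb0' hb 0 self_mem_Ici).tendsto.mono_left
      (nhdsWithin_mono _ Ioi_subset_Ici_self)
    rwa [sumMin_zero hb0'] at this

theorem dimLT_sumMin_id (hb0 : ∀ k, 0 < b k) (hb : Summable b) : DimLT (sumMin b) id := by
  have hb0' : ∀ k, 0 ≤ b k := fun k => (hb0 k).le
  suffices Tendsto (fun s => sumMin b s / s) (𝓝[>] 0) atTop by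
    exact this.inv_tendsto_atTop.congr fun s => by simp only [Pi.inv_apply, inv_div, id]
  refine tendsto_atTop.2 fun B => ?_
  obtain ⟨N, hN⟩ := exists_nat_ge B
  have hsmall : ∀ᶠ s in 𝓝[>] 0, ∀ k ∈ Finset.range N, s ≤ b k :=
    (Finset.range N).eventually_all.2 fun k _ => by
      filter_upwards [Ioo_mem_nhdsGT (hb0 k)] with s hs using hs.2.le
  filter_upwards [hsmall, self_mem_nhdsWithin] with s hs (hs0 : 0 < s)
  rw [le_div_iff₀ hs0]
  exact (mul_le_mul_of_nonneg_right hN hs0.le).trans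
    (nat_mul_le_sumMin hb0' hb hs0.le fun k hk => hs k (Finset.mem_range.2 hk))

theorem ofReal_sumMin_comp_le {h : ℝ → ℝ} (hm : MonotoneOn h (Ioi 0))
    (hp : ∀ t, 0 < t → 0 < h t) {δ : ℕ → ℝ} (hδ : ∀ k, 0 < δ k) (hb0 : ∀ k, 0 ≤ b k)
    (hb : Summable b) (hbδ : ∀ k, b k ≤ 2⁻¹ ^ k * h (δ k)) {t : ℝ} (ht : 0 < t) :
    ENNReal.ofReal (sumMin b (h t)) ≤
      ∑' k, (Iio (δ k)).indicator (fun t => ENNReal.ofReal (h t)) t + 2 * ENNReal.ofReal (h t) := by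
  have hterm : ∀ k, ENNReal.ofReal (min (h t) (b k)) ≤
      (Iio (δ k)).indicator (fun t => ENNReal.ofReal (h t)) t + 2⁻¹ ^ k * ENNReal.ofReal (h t) := by
    intro k
    by_cases htk : t < δ k
    · rw [indicator_of_mem (mem_Iio.2 htk)]
      exact (ENNReal.ofReal_le_ofReal (min_le_left _ _)).trans le_self_add
    · rw [indicator_of_notMem (notMem_Iio.2 (not_lt.1 htk)), zero_add]
      have hle : min (h t) (b k) ≤ 2⁻¹ ^ k * h t :=
        (min_le_right _ _).trans <| (hbδ k).trans <|
          mul_le_mul_of_nonneg_left (hm (hδ k) ht (not_lt.1 htk)) (by positivity)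
      calc ENNReal.ofReal (min (h t) (b k)) ≤ ENNReal.ofReal (2⁻¹ ^ k * h t) :=
            ENNReal.ofReal_le_ofReal hle
        _ = 2⁻¹ ^ k * ENNReal.ofReal (h t) := by
            rw [ENNReal.ofReal_mul (by positivity), ENNReal.ofReal_pow (by norm_num),
              ENNReal.ofReal_inv_of_pos two_pos, ENNReal.ofReal_ofNat]
  calc ENNReal.ofReal (sumMin b (h t)) = ∑' k, ENNReal.ofReal (min (h t) (b k)) :=
        ENNReal.ofReal_tsum_of_nonneg (fun k => le_min (hp t ht).le (hb0 k))
          (summable_min hb0 hb (hp t ht).le)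
    _ ≤ _ := ENNReal.tsum_le_tsum hterm
    _ = _ := by
        rw [ENNReal.tsum_add, ENNReal.tsum_mul_right, ENNReal.tsum_geometric,
          ENNReal.one_sub_inv_two, inv_inv]

end SumMin

/-- Theorem 4(a) of the paper. -/
theorem prepacking_zero_down (d : ℕ) (h : ℝ → ℝ) (hh : IsDimFun h)
    (A : Set (EuclideanSpace ℝ (Fin d))) (hA : packingPre0 d h A = 0) :
    ∃ g : ℝ → ℝ, IsDimFun g ∧ DimLT g h ∧ packingPre0 d g A = 0 := by
  rw [packingPre0_eq_zero_iff] at hA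
  choose δ hδ hδ_pos using fun k : ℕ =>
    ((ENNReal.tendsto_nhds_zero.1 hA (2⁻¹ ^ k) (ENNReal.pow_pos (by norm_num) k)).and
      self_mem_nhdsWithin).exists
  set b : ℕ → ℝ := fun k => 2⁻¹ ^ k * min (h (δ k)) 1
  have hb_pos : ∀ k, 0 < b k := fun k => by
    have := hh.2.2.1 _ (hδ_pos k)
    positivity
  have hb : Summable b :=
    (summable_geometric_of_lt_one (by norm_num) (by norm_num)).of_nonneg_of_le
      (fun k => (hb_pos k).le) fun k => mul_le_of_le_one_right (by positivity) (min_le_right _ _)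
  have hbδ : ∀ k, b k ≤ 2⁻¹ ^ k * h (δ k) := fun k =>
    mul_le_mul_of_nonneg_left (min_le_left _ _) (by positivity)
  refine ⟨sumMin b ∘ h, (isDimFun_sumMin hb_pos hb).comp hh,
    (dimLT_sumMin_id hb_pos hb).comp hh, ?_⟩
  have hδ_sum : ∑' k, packingPre d h (δ k) A ≠ ∞ :=
    ne_top_of_le_ne_top (by simp [ENNReal.tsum_geometric]) (ENNReal.tsum_le_tsum hδ)
  have hlim : Tendsto (fun δ' => ∑' k, packingPre d h (min δ' (δ k)) A + 2 * packingPre d h δ' A)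
      (𝓝[>] 0) (𝓝 0) := by
    simpa using (tendsto_tsum_packingPre_min hA hδ_sum).add
      (ENNReal.Tendsto.const_mul hA (Or.inr ENNReal.ofNat_ne_top))
  rw [packingPre0_eq_zero_iff]
  exact tendsto_of_tendsto_of_tendsto_of_le_of_le tendsto_const_nhds hlim (fun _ => zero_le)
    fun δ' => packingPre_le_tsum_add fun t ht =>
      ofReal_sumMin_comp_le hh.2.1 hh.2.2.1 hδ_pos (fun k => (hb_pos k).le) hb hbδ ht
end

section
/- Let A ⊆ ℝ^d and h ∈ 𝒟. If P_0^h(A) = +∞, then there exists g ∈ 𝒟 with h ≺ g such that P_0^g(A) = +∞. -/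
open Set Metric Filter Topology
open scoped ENNReal

lemma finset_le_packingPre (d : ℕ) (g : ℝ → ℝ) (δ : ℝ)
    (A : Set (EuclideanSpace ℝ (Fin d))) (c : ℕ → EuclideanSpace ℝ (Fin d))
    (r : ℕ → ℝ) (F : Finset ℕ)
    (hc : ∀ i ∈ F, c i ∈ A) (hr : ∀ i ∈ F, 0 < r i) (hδ : ∀ i ∈ F, 2 * r i < δ)
    (hdisj : (↑F : Set ℕ).PairwiseDisjoint fun i => ball (c i) (r i)) :
    ∑ i ∈ F, ENNReal.ofReal (g (2 * r i)) ≤ packingPre d g δ A := by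
  rw [packingPre]
  refine le_iSup_of_le c (le_iSup_of_le r (le_iSup_of_le (↑F : Set ℕ) ?_))
  refine le_iSup_of_le (by simpa using hc) (le_iSup_of_le (by simpa using hr)
    (le_iSup_of_le (by simpa using hδ) (le_iSup_of_le hdisj ?_)))
  rw [Finset.tsum_subtype' F (fun i => ENNReal.ofReal (g (2 * r i)))]

lemma exists_finset_packing (d : ℕ) (h : ℝ → ℝ)
    (A : Set (EuclideanSpace ℝ (Fin d))) (hA : packingPre0 d h A = ⊤)
    (δ : ℝ) (hδ : 0 < δ) (M : ℝ≥0∞) (hM : M ≠ ⊤) :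
    ∃ (c : ℕ → EuclideanSpace ℝ (Fin d)) (r : ℕ → ℝ) (F : Finset ℕ),
      (∀ i ∈ F, c i ∈ A) ∧ (∀ i ∈ F, 0 < r i) ∧ (∀ i ∈ F, 2 * r i < δ) ∧
      ((↑F : Set ℕ).PairwiseDisjoint fun i => ball (c i) (r i)) ∧
      M < ∑ i ∈ F, ENNReal.ofReal (h (2 * r i)) := by
  classical
  rw [packingPre0, iInf_eq_top] at hA
  have h1 : packingPre d h δ A = ⊤ := by
    have := hA δ; rw [iInf_eq_top] at this; exact this hδ
  have h2 : M < packingPre d h δ A := h1 ▸ hM.lt_top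
  rw [packingPre] at h2
  simp only [lt_iSup_iff] at h2
  obtain ⟨c, r, s, hc, hr, hrδ, hdisj, hsum⟩ := h2
  rw [tsum_subtype s (fun i => ENNReal.ofReal (h (2 * r i))),
    ENNReal.tsum_eq_iSup_sum, lt_iSup_iff] at hsum
  obtain ⟨t, ht⟩ := hsum
  refine ⟨c, r, t.filter (· ∈ s), ?_, ?_, ?_, ?_, ?_⟩
  · intro i hi; exact hc i (Finset.mem_filter.mp hi).2
  · intro i hi; exact hr i (Finset.mem_filter.mp hi).2
  · intro i hi; exact hrδ i (Finset.mem_filter.mp hi).2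
  · refine hdisj.subset ?_; intro i hi
    exact (Finset.mem_filter.mp hi).2
  · calc M < ∑ i ∈ t, Set.indicator s (fun i => ENNReal.ofReal (h (2 * r i))) i := ht
      _ = ∑ i ∈ t.filter (· ∈ s), ENNReal.ofReal (h (2 * r i)) := by
          rw [Finset.sum_filter]
          exact Finset.sum_congr rfl fun i _ => by simp [Set.indicator_apply]

/-- Theorem 4(b) of the paper. -/
theorem prepacking_infty_up (d : ℕ) (h : ℝ → ℝ) (hh : IsDimFun h)
    (A : Set (EuclideanSpace ℝ (Fin d))) (hA : packingPre0 d h A = ⊤) :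
    ∃ g : ℝ → ℝ, IsDimFun g ∧ DimLT h g ∧ packingPre0 d g A = ⊤ := by
  classical
  -- For each n, pick a finite packing of diameters < 1/(n+1) with h-sum > n·2ⁿ.
  have key : ∀ n : ℕ, ∃ (c : ℕ → EuclideanSpace ℝ (Fin d)) (r : ℕ → ℝ) (F : Finset ℕ),
      (∀ i ∈ F, c i ∈ A) ∧ (∀ i ∈ F, 0 < r i) ∧ (∀ i ∈ F, 2 * r i < 1 / (n + 1)) ∧
      ((↑F : Set ℕ).PairwiseDisjoint fun i => ball (c i) (r i)) ∧
      (n : ℝ≥0∞) * 2 ^ n < ∑ i ∈ F, ENNReal.ofReal (h (2 * r i)) := by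
    intro n
    exact exists_finset_packing d h A hA (1 / (n + 1)) (by positivity)
      ((n : ℝ≥0∞) * 2 ^ n)
      (ENNReal.mul_ne_top (ENNReal.natCast_ne_top n) (ENNReal.pow_ne_top ENNReal.ofNat_ne_top))
  choose c r F hc hr hrδ hdisj hsum using key
  -- minimal diameter of the n-th packing
  set x : ℕ → ℝ := fun n =>
    if hF : (F n).Nonempty then (F n).inf' hF (fun i => 2 * r n i) else 1 with hxdef
  have hxpos : ∀ n, 0 < x n := by
    intro n
    by_cases hF : (F n).Nonempty
    · simp only [hxdef, dif_pos hF]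
      rw [Finset.lt_inf'_iff]
      intro i hi; have := hr n i hi; linarith
    · simp [hxdef, dif_neg hF]
  have hxle : ∀ n, ∀ i ∈ F n, x n ≤ 2 * r n i := by
    intro n i hi
    have hF : (F n).Nonempty := ⟨i, hi⟩
    simp only [hxdef, dif_pos hF]
    exact Finset.inf'_le _ hi
  -- the weight function
  set f : ℕ → ℝ → ℝ := fun m t => (1 / 2 : ℝ) ^ m * min 1 (max (t / x m) 0) with hfdef
  have hf_nonneg : ∀ m t, 0 ≤ f m t := by
    intro m t
    exact mul_nonneg (by positivity) (le_min zero_le_one (le_max_right _ _))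
  have hf_le : ∀ m t, f m t ≤ (1 / 2 : ℝ) ^ m := by
    intro m t
    have : min 1 (max (t / x m) 0) ≤ 1 := min_le_left _ _
    calc f m t ≤ (1 / 2 : ℝ) ^ m * 1 := by
          exact mul_le_mul_of_nonneg_left this (by positivity)
      _ = (1 / 2 : ℝ) ^ m := mul_one _
  have hsummable : Summable fun m => (1 / 2 : ℝ) ^ m :=
    summable_geometric_of_lt_one (by norm_num) (by norm_num)
  have hfsummable : ∀ t, Summable fun m => f m t := by
    intro t
    exact Summable.of_nonneg_of_le (fun m => hf_nonneg m t) (fun m => hf_le m t) hsummable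
  set w : ℝ → ℝ := fun t => ∑' m, f m t with hwdef
  have hf_mono : ∀ m, Monotone (f m) := by
    intro m a b hab
    apply mul_le_mul_of_nonneg_left _ (by positivity)
    refine min_le_min le_rfl (max_le_max ?_ le_rfl)
    exact div_le_div_of_nonneg_right hab (hxpos m).le
  have hwmono : Monotone w := by
    intro a b hab
    exact Summable.tsum_le_tsum (fun m => hf_mono m hab) (hfsummable a) (hfsummable b)
  have hwcont : Continuous w := by
    refine continuous_tsum (fun m => ?_) hsummable (fun m t => ?_)
    · have : Continuous fun t : ℝ => t / x m := continuous_id.div_const _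
      fun_prop
    · rw [Real.norm_eq_abs, abs_of_nonneg (hf_nonneg m t)]
      exact hf_le m t
  have hwnonneg : ∀ t, 0 ≤ w t := fun t => tsum_nonneg (fun m => hf_nonneg m t)
  have hwle : ∀ t, w t ≤ 2 := by
    intro t
    calc w t ≤ ∑' m, (1 / 2 : ℝ) ^ m :=
          Summable.tsum_le_tsum (fun m => hf_le m t) (hfsummable t) hsummable
      _ = 2 := tsum_geometric_two
  have hwpos : ∀ t : ℝ, 0 < t → 0 < w t := by
    intro t ht
    have h0 : 0 < f 0 t := by
      simp only [hfdef, pow_zero, one_mul]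
      have h1 : 0 < t / x 0 := div_pos ht (hxpos 0)
      rw [max_eq_left h1.le]
      exact lt_min one_pos h1
    exact h0.trans_le (Summable.le_tsum (hfsummable t) 0 (fun m _ => hf_nonneg m t))
  have hwge : ∀ n : ℕ, ∀ t : ℝ, x n ≤ t → (1 / 2 : ℝ) ^ n ≤ w t := by
    intro n t hxt
    have : f n t = (1 / 2 : ℝ) ^ n := by
      have h1 : (1 : ℝ) ≤ t / x n := (one_le_div (hxpos n)).mpr hxt
      have h2 : (0 : ℝ) ≤ t / x n := le_trans zero_le_one h1
      simp [hfdef, max_eq_left h2, min_eq_left h1]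
    calc (1 / 2 : ℝ) ^ n = f n t := this.symm
      _ ≤ w t := Summable.le_tsum (hfsummable t) n (fun m _ => hf_nonneg m t)
  have hw0 : Tendsto w (𝓝[>] (0 : ℝ)) (𝓝 0) := by
    have := tendsto_tsum_of_dominated_convergence (𝓕 := 𝓝[>] (0 : ℝ))
      (f := fun t m => f m t) (g := fun _ : ℕ => (0 : ℝ)) hsummable
      (fun m => ?_) (Eventually.of_forall fun t m => ?_)
    · simpa [tsum_zero] using this
    · have hcont : Continuous (f m) := by
        have : Continuous fun t : ℝ => t / x m := continuous_id.div_const _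
        fun_prop
      have h0 : f m 0 = 0 := by simp [hfdef]
      have := (hcont.tendsto 0).mono_left (nhdsWithin_le_nhds (s := Set.Ioi (0:ℝ)))
      rwa [h0] at this
    · rw [Real.norm_eq_abs, abs_of_nonneg (hf_nonneg m t)]
      exact hf_le m t
  -- the new dimension function
  refine ⟨fun t => h t * w t, ⟨?_, ?_, ?_, ?_⟩, ?_, ?_⟩
  · exact hh.1.mul hwcont.continuousOn
  · intro a ha b hb hab
    exact mul_le_mul (hh.2.1 ha hb hab) (hwmono hab) (hwnonneg a) (hh.2.2.1 b hb).le
  · exact fun t ht => mul_pos (hh.2.2.1 t ht) (hwpos t ht)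
  · refine squeeze_zero' ?_ ?_ (by simpa using hh.2.2.2.const_mul 2)
    · filter_upwards [self_mem_nhdsWithin] with t ht
      exact mul_nonneg (hh.2.2.1 t ht).le (hwnonneg t)
    · filter_upwards [self_mem_nhdsWithin] with t ht
      calc h t * w t ≤ h t * 2 := by
            exact mul_le_mul_of_nonneg_left (hwle t) (hh.2.2.1 t ht).le
        _ = 2 * h t := by ring
  · -- DimLT h g
    rw [DimLT]
    refine hw0.congr' ?_
    filter_upwards [self_mem_nhdsWithin] with t ht
    rw [mul_div_cancel_left₀ _ (hh.2.2.1 t ht).ne']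
  · -- packing premeasure infinite
    rw [packingPre0, iInf_eq_top]
    intro δ
    rw [iInf_eq_top]
    intro hδ
    rw [eq_top_iff, ← ENNReal.iSup_natCast]
    refine iSup_le fun n => ?_
    obtain ⟨k, hk⟩ := exists_nat_gt (1 / δ)
    set m := max n k with hm
    have hkpos : (0:ℝ) < k := lt_of_le_of_lt (by positivity) hk
    have hmδ : 1 / ((m : ℝ) + 1) < δ := by
      have h1 : (1:ℝ) / δ < m + 1 := by
        calc (1:ℝ) / δ < k := hk
          _ ≤ m := by exact_mod_cast le_max_right n k
          _ ≤ m + 1 := by linarith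
      calc 1 / ((m:ℝ) + 1) < 1 / (1 / δ) := by
            apply div_lt_div_of_pos_left one_pos (by positivity) h1
        _ = δ := one_div_one_div δ
    have step : (m : ℝ≥0∞) ≤ packingPre d (fun t => h t * w t) δ A := by
      have hle : ∑ i ∈ F m, ENNReal.ofReal ((fun t => h t * w t) (2 * r m i)) ≤
          packingPre d (fun t => h t * w t) δ A := by
        refine finset_le_packingPre d _ δ A (c m) (r m) (F m) (hc m) (hr m)
          (fun i hi => lt_trans (hrδ m i hi) hmδ) (hdisj m)
      refine le_trans ?_ hle
      have hterm : ∀ i ∈ F m, ENNReal.ofReal ((1/2:ℝ)^m) * ENNReal.ofReal (h (2 * r m i)) ≤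
          ENNReal.ofReal (h (2 * r m i) * w (2 * r m i)) := by
        intro i hi
        rw [← ENNReal.ofReal_mul (by positivity)]
        apply ENNReal.ofReal_le_ofReal
        rw [mul_comm]
        exact mul_le_mul_of_nonneg_left (hwge m _ (hxle m i hi))
          (hh.2.2.1 _ (by have := hr m i hi; linarith)).le
      calc (m : ℝ≥0∞) = ENNReal.ofReal ((1/2:ℝ)^m) * ((m : ℝ≥0∞) * 2 ^ m) := by
            rw [ENNReal.ofReal_pow (by norm_num)]
            have : ENNReal.ofReal (1/2 : ℝ) = 2⁻¹ := by
              rw [one_div, ENNReal.ofReal_inv_of_pos (by norm_num)]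
              norm_num
            rw [this, mul_comm ((m:ℝ≥0∞)) (2^m), ← mul_assoc, ← mul_pow,
              ENNReal.inv_mul_cancel (by norm_num) (by norm_num), one_pow, one_mul]
        _ ≤ ENNReal.ofReal ((1/2:ℝ)^m) * ∑ i ∈ F m, ENNReal.ofReal (h (2 * r m i)) := by
            exact mul_le_mul_right (hsum m).le _
        _ = ∑ i ∈ F m, ENNReal.ofReal ((1/2:ℝ)^m) * ENNReal.ofReal (h (2 * r m i)) := by
            rw [Finset.mul_sum]
        _ ≤ ∑ i ∈ F m, ENNReal.ofReal ((fun t => h t * w t) (2 * r m i)) :=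
            Finset.sum_le_sum hterm
    exact le_trans (by exact_mod_cast Nat.cast_le.mpr (le_max_left n k)) step
end

section
/- Let E ⊆ ℝ^d and h ∈ 𝒟. If ℋ^h(E) = 0, then there exists g ∈ 𝒟 with g ≺ h such that ℋ^g(E) = 0. -/
open Set Metric Filter Topology
open scoped ENNReal

/-- The Hausdorff measure on `ℝ^d` associated to the gauge (dimension) function `h`. -/
noncomputable def hausdorffGauge (d : ℕ) (h : ℝ → ℝ) :
    MeasureTheory.Measure (EuclideanSpace ℝ (Fin d)) :=
  MeasureTheory.Measure.mkMetric (fun r : ℝ≥0∞ => ENNReal.ofReal (h r.toReal))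

open scoped NNReal

/-!
Take coverings `C j` of `E` by sets of diameter at most `2⁻ʲ` with `∑ₙ h (diam (C j n)) < 2⁻ʲ`.
All their pieces together form one countable family with summable `h`-costs `aᵢ`, and for any
summable family there are `cₖ > 0` with `∑ₖ cₖ < ∞` and `∑ₖ ∑ᵢ min aᵢ cₖ < ∞`. The gauge
`g = ∑ₖ min h cₖ` is a dimension function with `g / h → ∞` at `0⁺` (close to `0`, its first `N`
terms all equal `h`), while the `g`-costs of all the pieces stay summable; hence the `g`-cost of
the `j`-th covering tends to `0`.
-/

theorem MeasureTheory.Measure.exists_cover_tsum_lt_of_mkMetric_eq_zero {X : Type*}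
    [EMetricSpace X] [MeasurableSpace X] [BorelSpace X] {m : ℝ≥0∞ → ℝ≥0∞} {s : Set X}
    (hs : mkMetric m s = 0) {r ε : ℝ≥0∞} (hr : 0 < r) (hε : 0 < ε) :
    ∃ t : ℕ → Set X, s ⊆ ⋃ n, t n ∧ (∀ n, ediam (t n) ≤ r) ∧
      ∑' n, ⨆ _ : (t n).Nonempty, m (ediam (t n)) < ε := by
  simp only [mkMetric_apply, ENNReal.iSup_eq_zero] at hs
  rw [← hs r hr] at hε
  simpa only [iInf_lt_iff, exists_prop] using hε

theorem MeasureTheory.Measure.mkMetric_eq_zero_of_tendsto_tsum {X : Type*} [EMetricSpace X]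
    [MeasurableSpace X] [BorelSpace X] {m : ℝ≥0∞ → ℝ≥0∞} {s : Set X} (C : ℕ → ℕ → Set X)
    {r : ℕ → ℝ≥0∞} (hr : Tendsto r atTop (𝓝 0)) (hCr : ∀ j n, ediam (C j n) ≤ r j)
    (hsC : ∀ j, s ⊆ ⋃ n, C j n) (hm : Tendsto (fun j => ∑' n, m (ediam (C j n))) atTop (𝓝 0)) :
    mkMetric m s = 0 :=
  le_antisymm ((mkMetric_le_liminf_tsum s r hr C (.of_forall hCr) (.of_forall hsC) m).trans
    hm.liminf_eq.le) zero_le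

theorem ENNReal.exists_pos_tsum_min_le {ι : Type*} {a : ι → ℝ≥0∞} (ha : ∑' i, a i ≠ ∞)
    {ε : ℝ≥0} (hε : 0 < ε) : ∃ c : ℝ≥0, 0 < c ∧ c ≤ ε ∧ ∑' i, min (a i) c ≤ ε := by
  obtain ⟨F, hF⟩ := ((ENNReal.tendsto_tsum_compl_atTop_zero ha).eventually
    (ge_mem_nhds (show (0 : ℝ≥0∞) < (ε / 2 : ℝ≥0) by simpa using hε.ne'))).exists
  set c : ℝ≥0 := ε / 2 / (F.card + 1)
  have hcard : F.card * c ≤ ε / 2 := by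
    calc F.card * c ≤ (F.card + 1) * c := by gcongr; exact le_self_add
      _ = ε / 2 := mul_div_cancel₀ _ (by positivity)
  refine ⟨c, by positivity, (div_le_self zero_le le_add_self).trans (half_le_self zero_le), ?_⟩
  calc ∑' i, min (a i) c
      = ∑ i ∈ F, min (a i) c + ∑' i : ↥(F : Set ι)ᶜ, min (a i) c :=
        (ENNReal.sum_add_tsum_compl _ _).symm
    _ ≤ ∑ _ ∈ F, (c : ℝ≥0∞) + ∑' i : ↥(F : Set ι)ᶜ, a i :=
        add_le_add (Finset.sum_le_sum fun i _ => min_le_right _ _)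
          (ENNReal.tsum_le_tsum fun i => min_le_left _ _)
    _ ≤ (ε / 2 : ℝ≥0) + (ε / 2 : ℝ≥0) := by
        gcongr
        · simpa using ENNReal.coe_le_coe.2 hcard
        · exact hF
    _ = ε := by rw [← ENNReal.coe_add, add_halves]

theorem ENNReal.exists_pos_summable_tsum_tsum_min_ne_top {ι : Type*} {a : ι → ℝ≥0∞}
    (ha : ∑' i, a i ≠ ∞) :
    ∃ c : ℕ → ℝ≥0, (∀ k, 0 < c k) ∧ Summable c ∧ ∑' k, ∑' i, min (a i) (c k) ≠ ∞ := by
  choose c hc_pos hc_le hc_sum using fun k : ℕ =>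
    ENNReal.exists_pos_tsum_min_le ha (pow_pos (inv_pos.2 two_pos) k : (0 : ℝ≥0) < 2⁻¹ ^ k)
  refine ⟨c, hc_pos, NNReal.summable_of_le hc_le (NNReal.summable_geometric (by norm_num)), ?_⟩
  refine ne_top_of_le_ne_top ?_ (ENNReal.tsum_le_tsum hc_sum)
  simp only [ENNReal.coe_pow, ENNReal.coe_inv two_ne_zero, ENNReal.coe_ofNat,
    ENNReal.tsum_geometric, ENNReal.one_sub_inv_two, inv_inv]
  exact ENNReal.ofNat_ne_top

/-- Set to `0` on `t ≤ 0`, so that the empty and one-point pieces of a covering cost nothing. -/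
noncomputable def gaugeSeries (h : ℝ → ℝ) (c : ℕ → ℝ≥0) (t : ℝ) : ℝ :=
  if 0 < t then ∑' k, min (h t) (c k) else 0

section gaugeSeries

variable {h : ℝ → ℝ} {c : ℕ → ℝ≥0} {t : ℝ}

theorem gaugeSeries_of_pos (ht : 0 < t) : gaugeSeries h c t = ∑' k, min (h t) (c k) :=
  if_pos ht

theorem gaugeSeries_of_nonpos (ht : t ≤ 0) : gaugeSeries h c t = 0 :=
  if_neg ht.not_gt

theorem summable_min_coe_of_nonneg {x : ℝ} (hx : 0 ≤ x) (hc : Summable c) :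
    Summable fun k => min x (c k) :=
  (NNReal.summable_coe.2 hc).of_nonneg_of_le (fun k => le_min hx (c k).coe_nonneg)
    fun _ => min_le_right _ _

theorem isDimFun_gaugeSeries (hh : IsDimFun h) (hc : Summable c) (hc0 : ∀ k, 0 < c k) :
    IsDimFun (gaugeSeries h c) := by
  obtain ⟨h_cont, h_mono, h_pos, h_lim⟩ := hh
  have eqOn : EqOn (fun t => ∑' k, min (h t) (c k)) (gaugeSeries h c) (Ioi 0) :=
    fun t ht => (gaugeSeries_of_pos ht).symm
  have norm_le : ∀ t ∈ Ioi (0 : ℝ), ∀ k, ‖min (h t) (c k)‖ ≤ c k := fun t ht k => by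
    rw [Real.norm_of_nonneg (le_min (h_pos t ht).le (c k).coe_nonneg)]
    exact min_le_right _ _
  refine ⟨?_, ?_, ?_, ?_⟩
  · exact (continuousOn_tsum (fun k => ContinuousOn.inf h_cont continuousOn_const)
      (NNReal.summable_coe.2 hc) fun k t ht => norm_le t ht k).congr eqOn.symm
  · intro s hs t ht hst
    rw [gaugeSeries_of_pos hs, gaugeSeries_of_pos ht]
    exact Summable.tsum_le_tsum (fun k => min_le_min_right _ (h_mono hs ht hst))
      (summable_min_coe_of_nonneg (h_pos s hs).le hc)
      (summable_min_coe_of_nonneg (h_pos t ht).le hc)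
  · intro t ht
    rw [gaugeSeries_of_pos ht]
    exact (summable_min_coe_of_nonneg (h_pos t ht).le hc).tsum_pos
      (fun k => le_min (h_pos t ht).le (c k).coe_nonneg) 0 (lt_min (h_pos t ht) (hc0 0))
  · have := tendsto_tsum_of_dominated_convergence (NNReal.summable_coe.2 hc)
      (fun k => h_lim.min tendsto_const_nhds) (eventually_mem_nhdsWithin.mono norm_le)
    simp only [min_eq_left (NNReal.coe_nonneg _), tsum_zero] at this
    exact this.congr' (eventually_mem_nhdsWithin.mono eqOn)

theorem tendsto_gaugeSeries_div_atTop (hh : IsDimFun h) (hc : Summable c) (hc0 : ∀ k, 0 < c k) :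
    Tendsto (fun t => gaugeSeries h c t / h t) (𝓝[>] 0) atTop := by
  obtain ⟨-, -, h_pos, h_lim⟩ := hh
  refine tendsto_atTop.2 fun b => ?_
  have h_small : ∀ᶠ t in 𝓝[>] (0 : ℝ), ∀ k ∈ Finset.range ⌈b⌉₊, h t < c k :=
    (eventually_all_finset _).2 fun k _ => h_lim.eventually_lt_const (hc0 k)
  filter_upwards [h_small, self_mem_nhdsWithin] with t ht_small ht
  have hsum : (⌈b⌉₊ : ℝ) * h t ≤ gaugeSeries h c t := by
    rw [gaugeSeries_of_pos ht]
    calc (⌈b⌉₊ : ℝ) * h t = ∑ k ∈ Finset.range ⌈b⌉₊, min (h t) (c k) := by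
          rw [Finset.sum_congr rfl fun k hk => min_eq_left (ht_small k hk).le]
          simp
      _ ≤ _ := (summable_min_coe_of_nonneg (h_pos t ht).le hc).sum_le_tsum _
          fun k _ => le_min (h_pos t ht).le (c k).coe_nonneg
  rw [le_div_iff₀ (h_pos t ht)]
  exact (mul_le_mul_of_nonneg_right (Nat.le_ceil b) (h_pos t ht).le).trans hsum

theorem dimLT_gaugeSeries (hh : IsDimFun h) (hc : Summable c) (hc0 : ∀ k, 0 < c k) :
    DimLT (gaugeSeries h c) h :=
  (tendsto_gaugeSeries_div_atTop hh hc hc0).inv_tendsto_atTop.congr fun _ => inv_div _ _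

theorem ofReal_gaugeSeries_le (hh : IsDimFun h) (hc : Summable c) (t : ℝ) :
    ENNReal.ofReal (gaugeSeries h c t) ≤ ∑' k, min (ENNReal.ofReal (h t)) (c k) := by
  rcases le_or_gt t 0 with ht | ht
  · simp [gaugeSeries_of_nonpos ht]
  have hht : 0 ≤ h t := (hh.2.2.1 t ht).le
  rw [gaugeSeries_of_pos ht, ENNReal.ofReal_tsum_of_nonneg
    (fun k => le_min hht (c k).coe_nonneg) (summable_min_coe_of_nonneg hht hc)]
  simp

theorem ofReal_gaugeSeries_ediam_le {X : Type*} [EMetricSpace X] (hh : IsDimFun h)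
    (hc : Summable c) (s : Set X) :
    ENNReal.ofReal (gaugeSeries h c (ediam s).toReal) ≤
      ∑' k, min (⨆ _ : s.Nonempty, ENNReal.ofReal (h (ediam s).toReal)) (c k) := by
  rcases s.eq_empty_or_nonempty with rfl | hs
  · simp [gaugeSeries_of_nonpos le_rfl]
  · simpa only [iSup_pos hs] using ofReal_gaugeSeries_le hh hc _

end gaugeSeries

/-- Theorem 1(a) of the paper, due to Besicovitch. -/
theorem hausdorff_zero_down (d : ℕ) (h : ℝ → ℝ) (hh : IsDimFun h)
    (E : Set (EuclideanSpace ℝ (Fin d))) (hE : hausdorffGauge d h E = 0) :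
    ∃ g : ℝ → ℝ, IsDimFun g ∧ DimLT g h ∧ hausdorffGauge d g E = 0 := by
  set r : ℕ → ℝ≥0∞ := fun j => 2⁻¹ ^ j
  have hr : ∀ j, 0 < r j := fun j => ENNReal.pow_pos (by simp) j
  choose C hEC hCr hCsum using fun j =>
    MeasureTheory.Measure.exists_cover_tsum_lt_of_mkMetric_eq_zero hE (hr j) (hr j)
  set a : ℕ → ℕ → ℝ≥0∞ := fun j n =>
    ⨆ _ : (C j n).Nonempty, ENNReal.ofReal (h (ediam (C j n)).toReal)
  have ha : ∑' p : ℕ × ℕ, a p.1 p.2 ≠ ∞ := by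
    rw [ENNReal.tsum_prod]
    refine ne_top_of_le_ne_top ?_ (ENNReal.tsum_le_tsum fun j => (hCsum j).le)
    simp [r, ENNReal.tsum_geometric]
  obtain ⟨c, hc0, hc, hac⟩ := ENNReal.exists_pos_summable_tsum_tsum_min_ne_top ha
  refine ⟨gaugeSeries h c, isDimFun_gaugeSeries hh hc hc0, dimLT_gaugeSeries hh hc hc0,
    MeasureTheory.Measure.mkMetric_eq_zero_of_tendsto_tsum C
      (ENNReal.tendsto_pow_atTop_nhds_zero_of_lt_one (by simp)) hCr hEC
      (ENNReal.tendsto_atTop_zero_of_tsum_ne_top (ne_top_of_le_ne_top hac ?_))⟩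
  calc ∑' j, ∑' n, ENNReal.ofReal (gaugeSeries h c (ediam (C j n)).toReal)
      ≤ ∑' j, ∑' n, ∑' k, min (a j n) (c k) :=
        ENNReal.tsum_le_tsum fun j => ENNReal.tsum_le_tsum fun n =>
          ofReal_gaugeSeries_ediam_le hh hc (C j n)
    _ = ∑' k, ∑' p : ℕ × ℕ, min (a p.1 p.2) (c k) := by
        simp_rw [ENNReal.tsum_prod']
        conv_rhs => rw [ENNReal.tsum_comm]
        exact tsum_congr fun j => ENNReal.tsum_comm
end

section
/- Let E ⊆ ℝ^d and h ∈ 𝒟. If 0 < 𝒫^h(E) and E is a countable union of sets of finite 𝒫^h measure (i.e., 𝒫^h restricted to E is σ-finite and nontrivial), then 𝒫^f(E) = 0 for every f ∈ 𝒟 with h ≺ f. -/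
open Set Metric Filter Topology
open scoped ENNReal

/-! On a set of finite `P_0^h` premeasure, `h ≺ f` gives `f(2r) ≤ ε h(2r)` for all small radii,
so every fine enough `f`-packing sum is at most `ε` times an `h`-packing sum and `P_0^f ≤ ε P_0^h`
for every `ε > 0`. Hence `P_0^f` vanishes on each piece of a cover realising the finiteness of
`𝒫^h`, and σ-finiteness makes `E` a countable union of such pieces. -/

section Packing

variable {d : ℕ} {h f : ℝ → ℝ} {A : Set (EuclideanSpace ℝ (Fin d))}

lemma packingPre_mono_s9 : Monotone fun δ => packingPre d h δ A := by
  intro δ₁ δ₂ hδ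
  refine iSup_le fun c => iSup_le fun r => iSup_le fun s => iSup_le fun hc => iSup_le fun hr =>
    iSup_le fun hlt => iSup_le fun hd => ?_
  exact le_iSup_of_le c <| le_iSup_of_le r <| le_iSup_of_le s <| le_iSup_of_le hc <|
    le_iSup_of_le hr <| le_iSup_of_le (fun i hi => (hlt i hi).trans_le hδ) <| le_iSup_of_le hd le_rfl

lemma tendsto_packingPre_packingPre0 :
    Tendsto (fun δ => packingPre d h δ A) (𝓝[>] 0) (𝓝 (packingPre0 d h A)) := by
  simpa only [packingPre0, sInf_image, mem_Ioi] using packingPre_mono_s9.tendsto_nhdsGT 0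

lemma packingPre_le_ofReal_mul {δ ε : ℝ} (hε : 0 ≤ ε)
    (hfh : ∀ t, 0 < t → t < δ → f t ≤ ε * h t) :
    packingPre d f δ A ≤ ENNReal.ofReal ε * packingPre d h δ A := by
  refine iSup_le fun c => iSup_le fun r => iSup_le fun s => iSup_le fun hc => iSup_le fun hr =>
    iSup_le fun hlt => iSup_le fun hd => ?_
  calc ∑' i : s, ENNReal.ofReal (f (2 * r i))
      ≤ ∑' i : s, ENNReal.ofReal ε * ENNReal.ofReal (h (2 * r i)) :=
        ENNReal.tsum_le_tsum fun i => by
          rw [← ENNReal.ofReal_mul hε]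
          exact ENNReal.ofReal_le_ofReal (hfh _ (by linarith [hr i i.2]) (hlt i i.2))
    _ = ENNReal.ofReal ε * ∑' i : s, ENNReal.ofReal (h (2 * r i)) := ENNReal.tsum_mul_left
    _ ≤ ENNReal.ofReal ε * packingPre d h δ A := by
        gcongr
        exact le_iSup_of_le c <| le_iSup_of_le r <| le_iSup_of_le s <| le_iSup_of_le hc <|
          le_iSup_of_le hr <| le_iSup_of_le hlt <| le_iSup_of_le hd le_rfl

lemma packingPre0_le_ofReal_mul_of_dimLT (hpos : ∀ t, 0 < t → 0 < h t) (hlt : DimLT h f)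
    {ε : ℝ} (hε : 0 < ε) :
    packingPre0 d f A ≤ ENNReal.ofReal ε * packingPre0 d h A := by
  obtain ⟨δ₀, hδ₀, hsmall⟩ :=
    mem_nhdsGT_iff_exists_Ioo_subset.mp (hlt.eventually (eventually_lt_nhds hε))
  have hfh : ∀ t, 0 < t → t < δ₀ → f t ≤ ε * h t := fun t ht htδ =>
    ((div_lt_iff₀ (hpos t ht)).mp (hsmall ⟨ht, htδ⟩)).le
  refine le_of_tendsto_of_tendsto tendsto_packingPre_packingPre0
    (ENNReal.Tendsto.const_mul tendsto_packingPre_packingPre0 (Or.inr ENNReal.ofReal_ne_top))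
    ?_
  filter_upwards [Ioo_mem_nhdsGT hδ₀] with δ hδ
  exact packingPre_le_ofReal_mul hε.le (fun t ht htδ => hfh t ht (htδ.trans hδ.2))

lemma packingPre0_eq_zero_of_dimLT (hpos : ∀ t, 0 < t → 0 < h t) (hlt : DimLT h f)
    (hA : packingPre0 d h A ≠ ⊤) : packingPre0 d f A = 0 := by
  have hlim : Tendsto (fun ε => ENNReal.ofReal ε * packingPre0 d h A) (𝓝[>] 0) (𝓝 0) := by
    simpa using ENNReal.Tendsto.mul_const (ENNReal.tendsto_ofReal
      (tendsto_nhdsWithin_of_tendsto_nhds (tendsto_id (x := 𝓝 (0 : ℝ))))) (Or.inr hA)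
  refine le_antisymm (ge_of_tendsto hlim ?_) zero_le
  filter_upwards [self_mem_nhdsWithin] with ε hε
  exact packingPre0_le_ofReal_mul_of_dimLT hpos hlt hε

lemma exists_cover_packingPre0_lt_top (hA : packingMeasure d h A < ⊤) :
    ∃ G : ℕ → Set (EuclideanSpace ℝ (Fin d)), A ⊆ ⋃ k, G k ∧ ∀ k, packingPre0 d h (G k) < ⊤ := by
  obtain ⟨G, hAG, hG⟩ : ∃ G : ℕ → Set (EuclideanSpace ℝ (Fin d)),
      A ⊆ ⋃ k, G k ∧ ∑' k, packingPre0 d h (G k) < ⊤ := by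
    simpa only [packingMeasure, iInf_lt_iff, exists_prop] using hA
  exact ⟨G, hAG, fun k => ENNReal.lt_top_of_tsum_ne_top hG.ne k⟩

lemma packingMeasure_eq_zero_of_subset_iUnion {E : Set (EuclideanSpace ℝ (Fin d))}
    {F : ℕ → Set (EuclideanSpace ℝ (Fin d))} (hE : E ⊆ ⋃ j, F j)
    (hF : ∀ j, packingPre0 d f (F j) = 0) : packingMeasure d f E = 0 :=
  nonpos_iff_eq_zero.mp <| (iInf₂_le F hE).trans_eq <| by simp only [hF, tsum_zero]

end Packing

theorem packing_zero_of_sigmaFinite_of_dimLT_general (d : ℕ) (h : ℝ → ℝ) (hh : IsDimFun h)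
    (E : Set (EuclideanSpace ℝ (Fin d)))
    (hsf : ∃ F : ℕ → Set (EuclideanSpace ℝ (Fin d)),
      E ⊆ ⋃ j, F j ∧ ∀ j, packingMeasure d h (F j) < ⊤)
    (f : ℝ → ℝ) (hlt : DimLT h f) :
    packingMeasure d f E = 0 := by
  obtain ⟨F, hEF, hF⟩ := hsf
  choose G hFG hG using fun j => exists_cover_packingPre0_lt_top (hF j)
  have hEG : E ⊆ ⋃ n : ℕ, G n.unpair.1 n.unpair.2 := by
    rw [iUnion_unpair]
    exact hEF.trans (iUnion_mono hFG)
  exact packingMeasure_eq_zero_of_subset_iUnion hEG fun n =>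
    packingPre0_eq_zero_of_dimLT hh.2.2.1 hlt (hG _ _).ne

/-- if the restriction of the packing measure to `E` is σ-finite and
nontrivial, then `E` is `𝒫^f`-null whenever `h ≺ f`. -/
theorem packing_zero_of_sigmaFinite_of_dimLT (d : ℕ) (h : ℝ → ℝ) (hh : IsDimFun h)
    (E : Set (EuclideanSpace ℝ (Fin d))) (hpos : 0 < packingMeasure d h E)
    (hsf : ∃ F : ℕ → Set (EuclideanSpace ℝ (Fin d)),
      E ⊆ ⋃ j, F j ∧ ∀ j, packingMeasure d h (F j) < ⊤)
    (f : ℝ → ℝ) (hf : IsDimFun f) (hlt : DimLT h f) :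
    packingMeasure d f E = 0 :=
  packing_zero_of_sigmaFinite_of_dimLT_general d h hh E hsf f hlt
end

section
/- Let E ⊆ ℝ^d and h ∈ 𝒟. If 0 < 𝒫^h(E) and E is a countable union of sets of finite 𝒫^h measure (i.e., 𝒫^h restricted to E is σ-finite and nontrivial), then E has non-σ-finite 𝒫^g measure for every g ∈ 𝒟 with g ≺ h. -/
open Set Metric Filter Topology
open scoped ENNReal

/-!
If `h t ≤ η g(t)` for small `t`, then every packing sum for `h` is at most `η` times the
corresponding one for `g`, so `𝒫^h ≤ η 𝒫^g`. Since `g ≺ h` allows any `η > 0`, every set of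
finite `𝒫^g` measure is `𝒫^h`-null. `𝒫^h` is the outer measure built from `P_0^h` by countable
covers, hence a countable union of such sets is `𝒫^h`-null too, which contradicts `𝒫^h(E) > 0`.
-/

open MeasureTheory

section Packing

variable {d : ℕ}

lemma packingPre_empty (h : ℝ → ℝ) (δ : ℝ) :
    packingPre d h δ (∅ : Set (EuclideanSpace ℝ (Fin d))) = 0 := by
  refine ENNReal.iSup_eq_zero.2 fun c => ENNReal.iSup_eq_zero.2 fun r =>
    ENNReal.iSup_eq_zero.2 fun s => ENNReal.iSup_eq_zero.2 fun hc => ?_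
  have hs : s = ∅ := eq_empty_of_forall_notMem fun i hi => hc i hi
  subst hs
  simp

lemma packingPre0_empty (h : ℝ → ℝ) :
    packingPre0 d h (∅ : Set (EuclideanSpace ℝ (Fin d))) = 0 :=
  nonpos_iff_eq_zero.1 <| (iInf₂_le 1 one_pos).trans (packingPre_empty h 1).le

lemma packingMeasure_eq_ofFunction (h : ℝ → ℝ) :
    packingMeasure d h = OuterMeasure.ofFunction (packingPre0 d h) (packingPre0_empty h) :=
  rfl

lemma packingPre_mono_delta (h : ℝ → ℝ) {δ δ' : ℝ} (hδ : δ ≤ δ')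
    (S : Set (EuclideanSpace ℝ (Fin d))) :
    packingPre d h δ S ≤ packingPre d h δ' S := by
  refine iSup_le fun c => iSup_le fun r => iSup_le fun s => iSup_le fun hc =>
    iSup_le fun hr => iSup_le fun hrδ => iSup_le fun hdisj => ?_
  exact le_iSup_of_le c <| le_iSup_of_le r <| le_iSup_of_le s <| le_iSup_of_le hc <|
    le_iSup_of_le hr <| le_iSup_of_le (fun i hi => (hrδ i hi).trans_le hδ) <|
    le_iSup_of_le hdisj le_rfl

lemma packingPre_le_mul {g h : ℝ → ℝ} {ε δ : ℝ} (hε : 0 ≤ ε)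
    (hhg : ∀ t ∈ Ioo 0 δ, h t ≤ ε * g t) (S : Set (EuclideanSpace ℝ (Fin d))) :
    packingPre d h δ S ≤ ENNReal.ofReal ε * packingPre d g δ S := by
  refine iSup_le fun c => iSup_le fun r => iSup_le fun s => iSup_le fun hc =>
    iSup_le fun hr => iSup_le fun hrδ => iSup_le fun hdisj => ?_
  calc ∑' i : s, ENNReal.ofReal (h (2 * r i))
      ≤ ∑' i : s, ENNReal.ofReal ε * ENNReal.ofReal (g (2 * r i)) :=
        ENNReal.tsum_le_tsum fun i => by
          rw [← ENNReal.ofReal_mul hε]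
          exact ENNReal.ofReal_le_ofReal
            (hhg _ ⟨mul_pos two_pos (hr i i.2), hrδ i i.2⟩)
    _ = ENNReal.ofReal ε * ∑' i : s, ENNReal.ofReal (g (2 * r i)) := ENNReal.tsum_mul_left
    _ ≤ ENNReal.ofReal ε * packingPre d g δ S := by
        gcongr
        exact le_iSup_of_le c <| le_iSup_of_le r <| le_iSup_of_le s <| le_iSup_of_le hc <|
          le_iSup_of_le hr <| le_iSup_of_le hrδ <| le_iSup_of_le hdisj le_rfl

lemma packingPre0_le_mul {g h : ℝ → ℝ} {ε : ℝ} (hε : 0 ≤ ε)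
    (hhg : ∀ᶠ t in 𝓝[>] 0, h t ≤ ε * g t) (S : Set (EuclideanSpace ℝ (Fin d))) :
    packingPre0 d h S ≤ ENNReal.ofReal ε * packingPre0 d g S := by
  obtain ⟨δ₀, hδ₀, hIoo⟩ := mem_nhdsGT_iff_exists_Ioo_subset.1 hhg
  have hg0 : packingPre0 d g S = ⨅ δ : Ioi (0 : ℝ), packingPre d g δ S := iInf_subtype'
  rw [hg0, ENNReal.mul_iInf fun htop => absurd htop ENNReal.ofReal_ne_top]
  refine le_iInf fun ⟨δ, hδ⟩ => ?_
  have hδmin : (0 : ℝ) < min δ δ₀ := lt_min hδ hδ₀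
  calc packingPre0 d h S ≤ packingPre d h (min δ δ₀) S := iInf₂_le _ hδmin
    _ ≤ ENNReal.ofReal ε * packingPre d g (min δ δ₀) S :=
        packingPre_le_mul hε (fun t ht => hIoo ⟨ht.1, ht.2.trans_le (min_le_right _ _)⟩) S
    _ ≤ ENNReal.ofReal ε * packingPre d g δ S := by
        gcongr
        exact packingPre_mono_delta g (min_le_left _ _) S

lemma packingMeasure_le_mul {g h : ℝ → ℝ} {ε : ℝ} (hε : 0 ≤ ε)
    (hhg : ∀ᶠ t in 𝓝[>] 0, h t ≤ ε * g t) (S : Set (EuclideanSpace ℝ (Fin d))) :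
    packingMeasure d h S ≤ ENNReal.ofReal ε * packingMeasure d g S := by
  have hle : OuterMeasure.ofFunction (packingPre0 d h) (packingPre0_empty h) ≤
      ENNReal.ofReal ε • OuterMeasure.ofFunction (packingPre0 d g) (packingPre0_empty g) := by
    rw [OuterMeasure.smul_ofFunction ENNReal.ofReal_ne_top, OuterMeasure.le_ofFunction]
    exact fun s => (OuterMeasure.ofFunction_le s).trans (packingPre0_le_mul hε hhg s)
  exact hle S

end Packing

lemma DimLT.eventually_le_mul {g h : ℝ → ℝ} (hlt : DimLT g h) (hg : ∀ t, 0 < t → 0 < g t)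
    {η : ℝ} (hη : 0 < η) : ∀ᶠ t in 𝓝[>] 0, h t ≤ η * g t := by
  filter_upwards [hlt.eventually (gt_mem_nhds hη), self_mem_nhdsWithin] with t hdiv ht
  exact ((div_lt_iff₀ (hg t ht)).1 hdiv).le

lemma packingMeasure_eq_zero_of_dimLT {d : ℕ} {g h : ℝ → ℝ} (hg : ∀ t, 0 < t → 0 < g t)
    (hlt : DimLT g h) {S : Set (EuclideanSpace ℝ (Fin d))}
    (hfin : packingMeasure d g S < ⊤) : packingMeasure d h S = 0 := by
  have hbound : ∀ᶠ η in 𝓝[>] (0 : ℝ),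
      packingMeasure d h S ≤ ENNReal.ofReal η * packingMeasure d g S := by
    filter_upwards [self_mem_nhdsWithin] with η hη
    exact packingMeasure_le_mul hη.le (hlt.eventually_le_mul hg hη) S
  have hlim : Tendsto (fun η => ENNReal.ofReal η * packingMeasure d g S) (𝓝[>] 0) (𝓝 0) := by
    simpa using ENNReal.Tendsto.mul_const
      ((ENNReal.continuous_ofReal.tendsto 0).mono_left nhdsWithin_le_nhds) (Or.inr hfin.ne)
  exact nonpos_iff_eq_zero.1 (ge_of_tendsto hlim hbound)

theorem packing_nonsigmafinite_of_sigmaFinite_of_dimLT_general (d : ℕ) (h : ℝ → ℝ)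
    (E : Set (EuclideanSpace ℝ (Fin d))) (hpos : 0 < packingMeasure d h E)
    (g : ℝ → ℝ) (hg : IsDimFun g) (hlt : DimLT g h) :
    NonSigmaFinitePacking d g E := by
  rintro ⟨C, hEC, hfin⟩
  have hnull : packingMeasure d h E = 0 := by
    rw [packingMeasure_eq_ofFunction]
    exact measure_mono_null hEC <|
      measure_iUnion_null fun j => packingMeasure_eq_zero_of_dimLT hg.2.2.1 hlt (hfin j)
  exact hpos.ne' hnull

/-- if the restriction of the packing measure to `E` is σ-finite and
nontrivial, then `E` has non-σ-finite `𝒫^g` measure whenever `g ≺ h`. -/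
theorem packing_nonsigmafinite_of_sigmaFinite_of_dimLT (d : ℕ) (h : ℝ → ℝ)
    (hh : IsDimFun h)
    (E : Set (EuclideanSpace ℝ (Fin d))) (hpos : 0 < packingMeasure d h E)
    (hsf : ∃ F : ℕ → Set (EuclideanSpace ℝ (Fin d)),
      E ⊆ ⋃ j, F j ∧ ∀ j, packingMeasure d h (F j) < ⊤)
    (g : ℝ → ℝ) (hg : IsDimFun g) (hlt : DimLT g h) :
    NonSigmaFinitePacking d g E :=
  packing_nonsigmafinite_of_sigmaFinite_of_dimLT_general d h E hpos g hg hlt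
end

section
/- The order ≺ on dimension functions is dense: if f, h ∈ 𝒟 satisfy f ≺ h, then there exists g ∈ 𝒟 with f ≺ g and g ≺ h. -/
/-!
The geometric mean `g = √(f h)` lies strictly between `f` and `h`: both `g / f` and `h / g`
equal `√(h / f)`, which tends to `0` together with `h / f`.
-/

open Set Metric Filter Topology
open scoped ENNReal

theorem Real.sqrt_mul_div_left {a : ℝ} (ha : 0 < a) (b : ℝ) : √(a * b) / a = √(b / a) := by
  rw [Real.sqrt_mul ha.le, Real.sqrt_div' b ha.le, ← Real.div_sqrt (x := a)]
  field_simp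
  rw [Real.sq_sqrt ha.le]

theorem Real.div_sqrt_mul_left {a b : ℝ} (ha : 0 < a) (hb : 0 ≤ b) :
    b / √(a * b) = √(b / a) := by
  rcases hb.eq_or_lt with rfl | hb
  · simp
  rw [mul_comm, Real.sqrt_mul hb.le, Real.sqrt_div' b ha.le, ← Real.div_sqrt (x := b)]
  field_simp
  rw [Real.sq_sqrt hb.le]

theorem IsDimFun.eventually_pos {h : ℝ → ℝ} (hh : IsDimFun h) :
    ∀ᶠ t in 𝓝[>] (0 : ℝ), 0 < h t :=
  eventually_nhdsWithin_of_forall hh.2.2.1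

theorem IsDimFun.sqrt_mul {f h : ℝ → ℝ} (hf : IsDimFun f) (hh : IsDimFun h) :
    IsDimFun fun t => √(f t * h t) := by
  obtain ⟨hf_cont, hf_mono, hf_pos, hf_lim⟩ := hf
  obtain ⟨hh_cont, hh_mono, hh_pos, hh_lim⟩ := hh
  refine ⟨(hf_cont.mul hh_cont).sqrt, ?_, fun t ht => ?_, ?_⟩
  · exact fun a ha b hb hab => Real.sqrt_le_sqrt <|
      mul_le_mul (hf_mono ha hb hab) (hh_mono ha hb hab) (hh_pos a ha).le (hf_pos b hb).le
  · exact Real.sqrt_pos.mpr (mul_pos (hf_pos t ht) (hh_pos t ht))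
  · simpa using (hf_lim.mul hh_lim).sqrt

section DimLT

variable {f h : ℝ → ℝ}

theorem DimLT.tendsto_sqrt_div (hlt : DimLT f h) :
    Tendsto (fun t => √(h t / f t)) (𝓝[>] 0) (𝓝 0) := by
  simpa using hlt.sqrt

theorem DimLT.sqrt_mul_left (hf : ∀ᶠ t in 𝓝[>] 0, 0 < f t) (hlt : DimLT f h) :
    DimLT f fun t => √(f t * h t) := by
  refine hlt.tendsto_sqrt_div.congr' ?_
  filter_upwards [hf] with t hft
  exact (Real.sqrt_mul_div_left hft (h t)).symm

theorem DimLT.sqrt_mul_right (hf : ∀ᶠ t in 𝓝[>] 0, 0 < f t) (hh : ∀ᶠ t in 𝓝[>] 0, 0 ≤ h t)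
    (hlt : DimLT f h) : DimLT (fun t => √(f t * h t)) h := by
  refine hlt.tendsto_sqrt_div.congr' ?_
  filter_upwards [hf, hh] with t hft hht
  exact (Real.div_sqrt_mul_left hft hht).symm

end DimLT

/-- the order `≺` on dimension functions is dense. -/
theorem dimLT_dense (f h : ℝ → ℝ) (hf : IsDimFun f) (hh : IsDimFun h)
    (hlt : DimLT f h) :
    ∃ g : ℝ → ℝ, IsDimFun g ∧ DimLT f g ∧ DimLT g h :=
  ⟨fun t => √(f t * h t), hf.sqrt_mul hh, hlt.sqrt_mul_left hf.eventually_pos,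
    hlt.sqrt_mul_right hf.eventually_pos (hh.eventually_pos.mono fun _ => le_of_lt)⟩
end

section
/- Let K ⊆ ℝ^d be a nonempty closed set and g ∈ 𝒟 such that P_0^g(U ∩ K) = +∞ for every open set U ⊆ ℝ^d with U ∩ K ≠ ∅. Then every subset E ⊆ K that is a dense G_δ subset of K (in the relative topology) has non-σ-finite 𝒫^g measure. -/
open Set Metric Filter Topology
open scoped ENNReal

lemma packingPre_le_closure {d : ℕ} {h : ℝ → ℝ} (hcont : ContinuousOn h (Ioi 0)) (δ : ℝ)
    {S A : Set (EuclideanSpace ℝ (Fin d))} (hS : S ⊆ closure A) :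
    packingPre d h δ S ≤ packingPre d h δ A := by
  refine iSup_le fun c => iSup_le fun r => iSup_le fun s => iSup_le fun h1 =>
    iSup_le fun h2 => iSup_le fun h3 => iSup_le fun h4 => ?_
  rw [ENNReal.tsum_eq_iSup_sum]
  refine iSup_le fun fs => ?_
  rcases fs.eq_empty_or_nonempty with rfl | hne
  · simp
  set m : ℝ := fs.inf' hne (fun j => r (j : ℕ)) with hm
  have hmpos : 0 < m := by
    rw [hm, Finset.lt_inf'_iff]
    exact fun j _ => h2 j j.2
  refine le_of_tendsto (f := fun ε : ℝ => ∑ i ∈ fs, ENNReal.ofReal (h (2 * (r (i : ℕ) - ε))))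
    (x := 𝓝[>] (0:ℝ)) ?_ ?_
  · have key : Tendsto (fun ε : ℝ => ∑ i ∈ fs, ENNReal.ofReal (h (2 * (r (i : ℕ) - ε))))
        (𝓝[>] (0:ℝ)) (𝓝 (∑ i ∈ fs, ENNReal.ofReal (h (2 * r (i : ℕ))))) := by
      refine tendsto_finset_sum _ fun i _ => ?_
      have hri : 0 < r (i : ℕ) := h2 _ i.2
      have hinner : Tendsto (fun ε : ℝ => 2 * (r (i : ℕ) - ε)) (𝓝[>] (0:ℝ))
          (𝓝[Ioi 0] (2 * r (i : ℕ))) := by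
        rw [tendsto_nhdsWithin_iff]
        constructor
        · have h0 : Tendsto (fun ε : ℝ => 2 * (r (i : ℕ) - ε)) (𝓝 (0:ℝ))
              (𝓝 (2 * (r (i : ℕ) - 0))) :=
            (continuous_const.mul (continuous_const.sub continuous_id)).tendsto 0
          simpa using h0.mono_left nhdsWithin_le_nhds
        · filter_upwards [Ioo_mem_nhdsGT_of_mem (show (0:ℝ) ∈ Ico 0 (r (i:ℕ)) from ⟨le_rfl, hri⟩)]
            with ε hε
          have : 0 < r (i : ℕ) - ε := by linarith [hε.2]
          simp only [mem_Ioi]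
          linarith
      exact (ENNReal.continuous_ofReal.tendsto _).comp
        (Filter.Tendsto.comp (hcont _ (mem_Ioi.mpr (by positivity))) hinner)
    exact key
  · filter_upwards [Ioo_mem_nhdsGT_of_mem (show (0:ℝ) ∈ Ico 0 m from ⟨le_rfl, hmpos⟩)]
      with ε hε
    obtain ⟨hε0, hεm⟩ := hε
    have hchoice : ∀ i ∈ s, ∃ b ∈ A, dist (c i) b < ε := fun i hi =>
      Metric.mem_closure_iff.mp (hS (h1 i hi)) ε hε0
    choose! a ha hdist using hchoice
    set s' : Set ℕ := ↑(fs.image (Subtype.val)) with hs'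
    have hs'sub : ∀ i ∈ s', i ∈ s := by
      intro i hi
      rw [hs', Finset.coe_image] at hi
      obtain ⟨j, _, rfl⟩ := hi
      exact j.2
    have hrε : ∀ i ∈ s', ε < r i := by
      intro i hi
      rw [hs', Finset.coe_image] at hi
      obtain ⟨j, hj, rfl⟩ := hi
      calc ε < m := hεm
        _ ≤ r (j : ℕ) := Finset.inf'_le _ hj
    have hballs : ∀ i ∈ s', ball (a i) (r i - ε) ⊆ ball (c i) (r i) := by
      intro i hi x hx
      rw [mem_ball] at hx ⊢
      have hd : dist (c i) (a i) < ε := hdist i (hs'sub i hi)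
      calc dist x (c i) ≤ dist x (a i) + dist (a i) (c i) := dist_triangle _ _ _
        _ < (r i - ε) + ε := by rw [dist_comm (a i)]; exact add_lt_add hx hd
        _ = r i := by ring
    have key : (∑' i : s', ENNReal.ofReal (h (2 * (r (i : ℕ) - ε))))
        = ∑ i ∈ fs, ENNReal.ofReal (h (2 * (r (i : ℕ) - ε))) := by
      rw [hs', Finset.tsum_subtype' (fs.image Subtype.val)
        (fun i => ENNReal.ofReal (h (2 * (r i - ε)))),
        Finset.sum_image (fun x _ y _ hxy => Subtype.val_injective hxy)]
    rw [← key]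
    refine le_iSup_of_le a (le_iSup_of_le (fun i => r i - ε) (le_iSup_of_le s' ?_))
    refine le_iSup_of_le (fun i hi => ha i (hs'sub i hi)) ?_
    refine le_iSup_of_le (fun i hi => sub_pos.mpr (hrε i hi)) ?_
    refine le_iSup_of_le (fun i hi => lt_of_le_of_lt
      (show 2 * (r i - ε) ≤ 2 * r i by linarith) (h3 i (hs'sub i hi))) ?_
    refine le_iSup_of_le ?_ le_rfl
    intro i hi j hj hij
    exact (h4 (hs'sub i hi) (hs'sub j hj) hij).mono (hballs i hi) (hballs j hj)

lemma packingPre0_le_closure {d : ℕ} {h : ℝ → ℝ} (hcont : ContinuousOn h (Ioi 0))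
    {S A : Set (EuclideanSpace ℝ (Fin d))} (hS : S ⊆ closure A) :
    packingPre0 d h S ≤ packingPre0 d h A :=
  le_iInf fun δ => le_iInf fun hδ =>
    (iInf₂_le δ hδ).trans (packingPre_le_closure hcont δ hS)

/-- dense relative `G_δ` subsets of a closed set with locally
infinite `g`-prepacking measure have non-σ-finite `𝒫^g` measure. -/
theorem dense_Gdelta_nonsigmafinite (d : ℕ) (g : ℝ → ℝ) (hg : IsDimFun g)
    (K : Set (EuclideanSpace ℝ (Fin d))) (hKcl : IsClosed K) (hKne : K.Nonempty)
    (hloc : ∀ U : Set (EuclideanSpace ℝ (Fin d)), IsOpen U → (U ∩ K).Nonempty →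
      packingPre0 d g (U ∩ K) = ⊤)
    (E : Set (EuclideanSpace ℝ (Fin d))) (hEK : E ⊆ K) (hdense : K ⊆ closure E)
    (hGdelta : ∃ U : ℕ → Set (EuclideanSpace ℝ (Fin d)),
      (∀ n, IsOpen (U n)) ∧ E = K ∩ ⋂ n, U n) :
    NonSigmaFinitePacking d g E := by
  obtain ⟨U, hUopen, hEeq⟩ := hGdelta
  rintro ⟨F, hFcov, hFfin⟩
  -- extract, for each j, a countable cover of F j by sets with finite premeasure
  have hex : ∀ j, ∃ G : ℕ → Set (EuclideanSpace ℝ (Fin d)),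
      F j ⊆ ⋃ i, G i ∧ ∀ i, packingPre0 d g (G i) < ⊤ := by
    intro j
    have hj := hFfin j
    rw [packingMeasure, iInf_lt_iff] at hj
    obtain ⟨G, hG⟩ := hj
    rw [iInf_lt_iff] at hG
    obtain ⟨hcov, hsum⟩ := hG
    exact ⟨G, hcov, fun i => lt_of_le_of_lt (ENNReal.le_tsum i) hsum⟩
  choose G hGcov hGfin using hex
  -- Baire category in the closed set K
  haveI : CompleteSpace K := hKcl.completeSpace_coe
  haveI : Nonempty K := hKne.to_subtype
  set f : (ℕ × ℕ) ⊕ ℕ → Set K := fun x =>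
    Sum.elim (fun p => Subtype.val ⁻¹' closure (G p.1 p.2))
      (fun n => Subtype.val ⁻¹' (U n)ᶜ) x with hf
  have hclosed : ∀ x, IsClosed (f x) := by
    rintro (p | n)
    · exact isClosed_closure.preimage continuous_subtype_val
    · exact (hUopen n).isClosed_compl.preimage continuous_subtype_val
  have hcover : ⋃ x, f x = univ := by
    apply eq_univ_of_forall
    intro x
    by_cases hx : ∀ n, (x : EuclideanSpace ℝ (Fin d)) ∈ U n
    · have hxE : (x : EuclideanSpace ℝ (Fin d)) ∈ E := by
        rw [hEeq]; exact ⟨x.2, mem_iInter.mpr hx⟩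
      obtain ⟨_, ⟨j, rfl⟩, hj⟩ := hFcov hxE
      obtain ⟨_, ⟨i, rfl⟩, hi⟩ := hGcov j hj
      exact mem_iUnion.mpr ⟨Sum.inl (j, i), subset_closure hi⟩
    · push_neg at hx
      obtain ⟨n, hn⟩ := hx
      exact mem_iUnion.mpr ⟨Sum.inr n, hn⟩
  obtain ⟨x, hx⟩ := nonempty_interior_of_iUnion_of_closed hclosed hcover
  -- the preimage of E in K is dense
  have hEdense : Dense (Subtype.val ⁻¹' E : Set K) := by
    intro y
    rw [closure_subtype, Subtype.image_preimage_coe,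
      inter_eq_right.mpr hEK]
    exact hdense y.2
  rcases x with p | n
  · -- a relatively open piece of K inside the closure of some G p.1 p.2
    obtain ⟨y, hy⟩ := hx
    rw [mem_interior] at hy
    obtain ⟨t, hts, htop, hyt⟩ := hy
    obtain ⟨V, hVopen, rfl⟩ := isOpen_induced_iff.mp htop
    have hVK : (V ∩ K).Nonempty := ⟨y, hyt, y.2⟩
    have hsub : V ∩ K ⊆ closure (G p.1 p.2) := by
      rintro z ⟨hzV, hzK⟩
      exact hts (show (⟨z, hzK⟩ : K) ∈ Subtype.val ⁻¹' V from hzV)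
    have : packingPre0 d g (V ∩ K) ≤ packingPre0 d g (G p.1 p.2) :=
      packingPre0_le_closure hg.1 hsub
    rw [hloc V hVopen hVK] at this
    exact absurd (top_le_iff.mp this) (hGfin p.1 p.2).ne
  · -- the complement of U n has empty interior in K
    have hUdense : Dense (Subtype.val ⁻¹' (U n) : Set K) := by
      refine hEdense.mono ?_
      intro z hz
      have : (z : EuclideanSpace ℝ (Fin d)) ∈ E := hz
      rw [hEeq] at this
      exact mem_iInter.mp this.2 n
    have : interior (Subtype.val ⁻¹' (U n)ᶜ : Set K) = ∅ := by
      rw [preimage_compl, interior_compl, hUdense.closure_eq, compl_univ]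
    rw [hf] at hx
    simp only [Sum.elim_inr] at hx
    rw [this] at hx
    exact hx.ne_empty rfl
end
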